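/- arXiv:1802.06300 — 3 statements merged into one kernel-verified Lean document; each statement's English description precedes it below -/
import Mathlib

section
/- If Π is a finite group of measurable transformations containing the identity, and S(Z^π) has the same joint distribution for all relabelings induced by Π (exchangeability), then the randomization p-value p̂ = (1/n) Σ_{π∈Π} 1{S(Z^π) ≥ S(Z)} satisfies P(p̂ ≤ α) ≤ α for every α ∈ (0,1). -/
/-!
Relabelling the data by `τ ∈ G` turns `p̂` into the rank p-value of coordinate `τ` of the vector
`(S(Z^σ))_σ`, and exchangeability says this has the same law as `p̂` itself. Hence
`n · P(p̂ ≤ α)` is the expected number of coordinates whose rank p-value is `≤ α`. For any real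
vector that number is at most `n α`: all the coordinates counted are at least the smallest of them,
and the rank p-value of that smallest one already counts them all.
-/

open MeasureTheory Finset

section RankPValue

variable {ι : Type*} [Fintype ι]

noncomputable def rankPValue (x : ι → ℝ) (i : ι) : ℝ :=
  #{j | x i ≤ x j} / Fintype.card ι

theorem measurable_rankPValue (i : ι) : Measurable fun x : ι → ℝ => rankPValue x i := by
  simp only [rankPValue, natCast_card_filter]
  refine Measurable.div_const (Finset.measurable_sum _ fun j _ => ?_) _
  exact Measurable.ite (measurableSet_le (measurable_pi_apply i) (measurable_pi_apply j))
    measurable_const measurable_const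

theorem card_rankPValue_le (x : ι → ℝ) (α : ℝ) :
    (#{i | rankPValue x i ≤ α} : ENNReal) ≤ Fintype.card ι * ENNReal.ofReal α := by
  rcases (univ.filter fun i => rankPValue x i ≤ α).eq_empty_or_nonempty with hA | hA
  · simp [hA]
  -- all `x i` counted lie above the least of them, `x i₀`, whose p-value counts them all
  obtain ⟨i₀, hi₀, hmin⟩ := exists_min_image _ x hA
  have hsub : ({i | rankPValue x i ≤ α} : Finset ι) ⊆ ({j | x i₀ ≤ x j} : Finset ι) :=
    fun i hi => mem_filter.mpr ⟨mem_univ i, hmin i hi⟩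
  have hn : (0 : ℝ) < Fintype.card ι := by
    have : Nonempty ι := ⟨i₀⟩
    exact_mod_cast Fintype.card_pos
  have hcount : (#{i | rankPValue x i ≤ α} : ℝ) ≤ Fintype.card ι * α := calc
    (#{i | rankPValue x i ≤ α} : ℝ) ≤ #{j | x i₀ ≤ x j} := by exact_mod_cast card_le_card hsub
    _ ≤ Fintype.card ι * α := by
      rw [← div_le_iff₀' hn]
      exact (mem_filter.mp hi₀).2
  calc (#{i | rankPValue x i ≤ α} : ENNReal)
      = ENNReal.ofReal (#{i | rankPValue x i ≤ α} : ℝ) := (ENNReal.ofReal_natCast _).symm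
    _ ≤ ENNReal.ofReal (Fintype.card ι * α) := ENNReal.ofReal_le_ofReal hcount
    _ = Fintype.card ι * ENNReal.ofReal α := by
      rw [ENNReal.ofReal_mul hn.le, ENNReal.ofReal_natCast]

end RankPValue

theorem rankPValue_mul_left {G : Type*} [Group G] [Fintype G] (x : G → ℝ) (τ σ : G) :
    rankPValue (fun σ => x (τ * σ)) σ = rankPValue x (τ * σ) := by
  unfold rankPValue
  congr 2
  exact card_equiv (Equiv.mulLeft τ) fun j => by simp

open Classical in
theorem sum_measure_le_of_forall_card_le {Ω ι : Type*} [MeasurableSpace Ω] [Fintype ι]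
    {μ : Measure Ω} {E : ι → Set Ω} (hE : ∀ i, MeasurableSet (E i)) {c : ENNReal}
    (hc : ∀ ω, (#{i | ω ∈ E i} : ENNReal) ≤ c) :
    ∑ i, μ (E i) ≤ c * μ Set.univ := calc
  ∑ i, μ (E i) = ∫⁻ ω, ∑ i, (E i).indicator 1 ω ∂μ := by
    rw [lintegral_finsetSum _ fun i _ => measurable_one.indicator (hE i)]
    exact sum_congr rfl fun i _ => (lintegral_indicator_one (hE i)).symm
  _ ≤ ∫⁻ _, c ∂μ := lintegral_mono fun ω => by
    simpa [Set.indicator_apply] using hc ω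
  _ = c * μ Set.univ := lintegral_const c

theorem measure_rankPValue_one_le {Ω G : Type*} [MeasurableSpace Ω] [Group G] [Fintype G]
    (μ : Measure Ω) (V : Ω → G → ℝ) (hV : Measurable V)
    (hinv : ∀ τ : G, μ.map (fun ω σ => V ω (τ * σ)) = μ.map V) (α : ℝ) :
    μ {ω | rankPValue (V ω) 1 ≤ α} ≤ ENNReal.ofReal α * μ Set.univ := by
  set E : G → Set Ω := fun τ => {ω | rankPValue (V ω) τ ≤ α}
  have hB : MeasurableSet {x : G → ℝ | rankPValue x 1 ≤ α} :=
    measurableSet_le (measurable_rankPValue 1) measurable_const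
  have hE : ∀ τ, MeasurableSet (E τ) := fun τ =>
    measurableSet_le ((measurable_rankPValue τ).comp hV) measurable_const
  -- `E τ` is the event `E 1` for the relabelled vector, which has the law of `V`
  have hEτ : ∀ τ, μ (E τ) = μ (E 1) := fun τ => by
    have hshift : Measurable fun ω σ => V ω (τ * σ) :=
      measurable_pi_lambda _ fun σ => (measurable_pi_apply (τ * σ)).comp hV
    have := congrArg (· {x | rankPValue x 1 ≤ α}) (hinv τ)
    simp only [Measure.map_apply hshift hB, Measure.map_apply hV hB] at this
    simpa [E, rankPValue_mul_left] using this
  have hn : (Fintype.card G : ENNReal) ≠ 0 := by simp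
  refine (ENNReal.mul_le_mul_iff_right hn (ENNReal.natCast_ne_top _)).mp ?_
  calc (Fintype.card G : ENNReal) * μ (E 1) = ∑ τ, μ (E τ) := by simp [hEτ]
    _ ≤ Fintype.card G * ENNReal.ofReal α * μ Set.univ :=
      sum_measure_le_of_forall_card_le hE fun ω => card_rankPValue_le (V ω) α
    _ = Fintype.card G * (ENNReal.ofReal α * μ Set.univ) := mul_assoc _ _ _

theorem stmt4_general {Ω : Type*} [MeasurableSpace Ω] (μ : Measure Ω) [IsProbabilityMeasure μ]
    {G : Type*} [Group G] [Fintype G]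
    (s : G → Ω → ℝ) (hmeas : ∀ σ : G, Measurable (s σ))
    (hexch : ∀ π : G,
      μ.map (fun ω => fun σ : G => s (π * σ) ω) = μ.map (fun ω => fun σ : G => s σ ω))
    (α : ℝ) :
    μ {ω | (∑ π : G, (if s π ω ≥ s 1 ω then (1 : ℝ) else 0)) / (Fintype.card G : ℝ) ≤ α}
      ≤ ENNReal.ofReal α := by
  have hpval : ∀ ω, (∑ π : G, (if s π ω ≥ s 1 ω then (1 : ℝ) else 0)) / Fintype.card G =
      rankPValue (fun σ => s σ ω) 1 := fun ω => by
    simp [rankPValue, sum_boole]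
  simp only [hpval]
  simpa using
    measure_rankPValue_one_le μ (fun ω σ => s σ ω) (measurable_pi_lambda _ hmeas) hexch α

/-- If `Π` is a finite group of transformations containing the identity
(modeled by a finite group `G`, where `s σ ω = S(Z^σ)(ω)` and the identity `1 ∈ G`
corresponds to `Z = Z^id`), and the joint distribution of `(S(Z^{π∘σ}))_{σ∈Π}` equals
that of `(S(Z^σ))_{σ∈Π}` for each `π ∈ Π` (exchangeability), then the randomization
p-value `p̂ = n⁻¹ Σ_{π∈Π} 1{S(Z^π) ≥ S(Z)}` satisfies `P(p̂ ≤ α) ≤ α` for `α ∈ (0,1)`. -/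
theorem stmt4 {Ω : Type*} [MeasurableSpace Ω] (μ : Measure Ω) [IsProbabilityMeasure μ]
    {G : Type*} [Group G] [Fintype G]
    (s : G → Ω → ℝ) (hmeas : ∀ σ : G, Measurable (s σ))
    (hexch : ∀ π : G,
      μ.map (fun ω => fun σ : G => s (π * σ) ω) = μ.map (fun ω => fun σ : G => s σ ω))
    (α : ℝ) (hα0 : 0 < α) (hα1 : α < 1) :
    μ {ω | (∑ π : G, (if s π ω ≥ s 1 ω then (1 : ℝ) else 0)) / (Fintype.card G : ℝ) ≤ α}
      ≤ ENNReal.ofReal α :=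
  stmt4_general μ s hmeas hexch α
end

section
/- Suppose real numbers a_π, b_π indexed by a finite set Π of size n satisfy: (i) n^{-1} Σ_π (a_π − b_π)² ≤ δ₂², (ii) the empirical CDF F̃(x) = n^{-1} Σ_π 1{b_π < x} satisfies sup_x |F̃(x) − F(x)| ≤ δ₁ for a CDF F that is D-Lipschitz. Then the empirical CDF F̂(x) = n^{-1} Σ_π 1{a_π < x} satisfies sup_x |F̂(x) − F̃(x)| ≤ 2δ₁ + 2δ₂ + 2D√δ₂. -/
/-!
Chebyshev's inequality bounds the proportion of indices with `|a π - b π| ≥ ε` by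
`δ₂² / ε²`, so shifting the threshold by `ε` turns `F̂` into `F̃` up to that proportion:
`F̃(x - ε) - δ₂²/ε² ≤ F̂(x) ≤ F̃(x + ε) + δ₂²/ε²`. Passing from `F̃` to `F` at `x ± ε` costs
`δ₁`, moving `F` back to `x` costs `D ε` by the Lipschitz bound, and returning to `F̃` costs
`δ₁` again. The choice `ε = √δ₂` balances the two error terms.
-/

open Finset

noncomputable def empiricalCDF {ι : Type*} [Fintype ι] (a : ι → ℝ) (x : ℝ) : ℝ :=
  (∑ π : ι, if a π < x then (1 : ℝ) else 0) / (Fintype.card ι : ℝ)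

lemma ite_lt_le_ite_lt_add_add_sq_div {u v x ε : ℝ} (hε : 0 < ε) :
    (if u < x then (1 : ℝ) else 0) ≤ (if v < x + ε then (1 : ℝ) else 0) + (u - v) ^ 2 / ε ^ 2 := by
  have hsq : 0 ≤ (u - v) ^ 2 / ε ^ 2 := by positivity
  split_ifs with hu hv
  · linarith
  · rw [zero_add, le_div_iff₀ (by positivity), one_mul, sub_sq_comm]
    exact pow_le_pow_left₀ hε.le (by linarith [not_lt.mp hv]) 2
  all_goals linarith

lemma empiricalCDF_le_empiricalCDF_add_add {ι : Type*} [Fintype ι] (a b : ι → ℝ) (x : ℝ)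
    {ε : ℝ} (hε : 0 < ε) :
    empiricalCDF a x ≤
      empiricalCDF b (x + ε) + (∑ π : ι, (a π - b π) ^ 2) / (Fintype.card ι : ℝ) / ε ^ 2 :=
  calc empiricalCDF a x
      ≤ (∑ π : ι, ((if b π < x + ε then (1 : ℝ) else 0) + (a π - b π) ^ 2 / ε ^ 2))
          / (Fintype.card ι : ℝ) := by
        unfold empiricalCDF
        gcongr with π
        exact ite_lt_le_ite_lt_add_add_sq_div hε
    _ = empiricalCDF b (x + ε) + (∑ π : ι, (a π - b π) ^ 2) / (Fintype.card ι : ℝ) / ε ^ 2 := by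
        rw [sum_add_distrib, add_div, ← sum_div, div_right_comm]
        rfl

theorem stmt12_general {ι : Type*} [Fintype ι] (a b : ι → ℝ)
    (δ₁ δ₂ D : ℝ) (hδ₂ : 0 < δ₂)
    (F : ℝ → ℝ)
    (hLip : ∀ x y, |F x - F y| ≤ D * |x - y|)
    (hmse : (∑ π : ι, (a π - b π) ^ 2) / (Fintype.card ι : ℝ) ≤ δ₂ ^ 2)
    (herg : ∀ x : ℝ,
      |(∑ π : ι, (if b π < x then (1 : ℝ) else 0)) / (Fintype.card ι : ℝ) - F x| ≤ δ₁) :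
    ∀ x : ℝ,
      |(∑ π : ι, (if a π < x then (1 : ℝ) else 0)) / (Fintype.card ι : ℝ)
        - (∑ π : ι, (if b π < x then (1 : ℝ) else 0)) / (Fintype.card ι : ℝ)|
      ≤ 2 * δ₁ + 2 * δ₂ + 2 * D * Real.sqrt δ₂ := by
  intro x
  change |empiricalCDF a x - empiricalCDF b x| ≤ _
  have herg' : ∀ y, |empiricalCDF b y - F y| ≤ δ₁ := herg
  set ε := Real.sqrt δ₂
  have hε : 0 < ε := Real.sqrt_pos.mpr hδ₂
  have hchebyshev : (∑ π : ι, (a π - b π) ^ 2) / (Fintype.card ι : ℝ) / ε ^ 2 ≤ δ₂ := by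
    rw [Real.sq_sqrt hδ₂.le, div_le_iff₀ hδ₂]
    linarith
  have hupper := empiricalCDF_le_empiricalCDF_add_add a b x hε
  have hlower := empiricalCDF_le_empiricalCDF_add_add b a (x - ε) hε
  simp only [sub_add_cancel, ← sub_sq_comm (a _)] at hlower
  have hLip_right : |F (x + ε) - F x| ≤ D * ε := by
    simpa [abs_of_pos hε] using hLip (x + ε) x
  have hLip_left : |F x - F (x - ε)| ≤ D * ε := by
    simpa [abs_of_pos hε] using hLip x (x - ε)
  obtain ⟨-, herg_right⟩ := abs_le.mp (herg' (x + ε))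
  obtain ⟨herg_left, -⟩ := abs_le.mp (herg' (x - ε))
  obtain ⟨herg_below, herg_above⟩ := abs_le.mp (herg' x)
  obtain ⟨hF_right_lower, hF_right_upper⟩ := abs_le.mp hLip_right
  obtain ⟨-, hF_left_upper⟩ := abs_le.mp hLip_left
  rw [abs_le]
  constructor <;> linarith

/-- Suppose reals `a_π, b_π` indexed by a finite set `Π` of size `n`
satisfy (i) `n⁻¹ Σ_π (a_π - b_π)² ≤ δ₂²`, and (ii) the empirical CDF
`F̃(x) = n⁻¹ Σ_π 1{b_π < x}` satisfies `sup_x |F̃(x) - F(x)| ≤ δ₁` for a CDF `F`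
that is `D`-Lipschitz.  Then the empirical CDF `F̂(x) = n⁻¹ Σ_π 1{a_π < x}` satisfies
`sup_x |F̂(x) - F̃(x)| ≤ 2δ₁ + 2δ₂ + 2D√δ₂`. -/
theorem stmt12 {ι : Type*} [Fintype ι] (a b : ι → ℝ)
    (δ₁ δ₂ D : ℝ) (hδ₁ : 0 < δ₁) (hδ₂ : 0 < δ₂) (hD : 0 < D)
    (F : ℝ → ℝ) (hFmono : Monotone F) (hF0 : ∀ x, 0 ≤ F x) (hF1 : ∀ x, F x ≤ 1)
    (hLip : ∀ x y, |F x - F y| ≤ D * |x - y|)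
    (hmse : (∑ π : ι, (a π - b π) ^ 2) / (Fintype.card ι : ℝ) ≤ δ₂ ^ 2)
    (herg : ∀ x : ℝ,
      |(∑ π : ι, (if b π < x then (1 : ℝ) else 0)) / (Fintype.card ι : ℝ) - F x| ≤ δ₁) :
    ∀ x : ℝ,
      |(∑ π : ι, (if a π < x then (1 : ℝ) else 0)) / (Fintype.card ι : ℝ)
        - (∑ π : ι, (if b π < x then (1 : ℝ) else 0)) / (Fintype.card ι : ℝ)|
      ≤ 2 * δ₁ + 2 * δ₂ + 2 * D * Real.sqrt δ₂ :=
  stmt12_general a b δ₁ δ₂ D hδ₂ F hLip hmse herg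
end

section
/- Under conditions (E) and (A), for any α ∈ (0,1), |P(p̂ ≤ α) − α| ≤ 6δ₁ + 4δ₂ + 2D(δ₂ + 2√δ₂) + γ₁ + γ₂, where p̂ = 1 − F̂(S(Z)) with F̂(x) = n^{-1} Σ_{π∈Π} 1{S(Z^π) < x}. -/
open MeasureTheory Filter Topology

lemma stmt13_quantile {Ω : Type*} [MeasurableSpace Ω] (μ : Measure Ω) [IsProbabilityMeasure μ]
    (X : Ω → ℝ) (hX : Measurable X) (F : ℝ → ℝ) (hF : ∀ x, F x = (μ {ω | X ω < x}).toReal)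
    (D : ℝ) (hD : 0 < D) (hLip : ∀ x y, |F x - F y| ≤ D * |x - y|)
    (t : ℝ) (ht0 : 0 < t) (ht1 : t < 1) :
    (μ {ω | t ≤ F (X ω)}).toReal = 1 - t := by
  have hmono : Monotone F := by
    intro x y hxy
    rw [hF, hF]
    have : {ω | X ω < x} ⊆ {ω | X ω < y} := fun ω h => lt_of_lt_of_le h hxy
    exact ENNReal.toReal_mono (measure_ne_top μ _) (measure_mono this)
  set Q : Set ℝ := {x | t ≤ F x} with hQ
  -- Q nonempty
  have hUnion : (⋃ k : ℕ, {ω | X ω < (k : ℝ)}) = Set.univ := by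
    ext ω; simp only [Set.mem_iUnion, Set.mem_setOf_eq, Set.mem_univ, iff_true]
    exact exists_nat_gt (X ω)
  have htendU : Tendsto (fun k : ℕ => μ {ω | X ω < (k : ℝ)}) atTop (𝓝 1) := by
    have hm : Monotone (fun k : ℕ => {ω | X ω < (k : ℝ)}) := by
      intro a b hab ω h
      simp only [Set.mem_setOf_eq] at h ⊢
      exact lt_of_lt_of_le h (by exact_mod_cast hab)
    have := tendsto_measure_iUnion_atTop (μ := μ) hm
    rw [hUnion, measure_univ] at this
    exact this
  have htendUr : Tendsto (fun k : ℕ => F (k : ℝ)) atTop (𝓝 1) := by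
    have := (ENNReal.tendsto_toReal (by norm_num : (1 : ENNReal) ≠ ⊤)).comp htendU
    simpa [hF, Function.comp_def] using this
  have hQne : Q.Nonempty := by
    have : ∀ᶠ k : ℕ in atTop, F (k : ℝ) ∈ Set.Ioi t :=
      htendUr (Ioi_mem_nhds ht1)
    obtain ⟨k, hk⟩ := this.exists
    exact ⟨(k : ℝ), show t ≤ F k from le_of_lt hk⟩
  -- Q bddBelow
  have hInter : (⋂ k : ℕ, {ω | X ω < -(k : ℝ)}) = ∅ := by
    ext ω; simp only [Set.mem_iInter, Set.mem_setOf_eq, Set.mem_empty_iff_false, iff_false,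
      not_forall, not_lt]
    obtain ⟨k, hk⟩ := exists_nat_gt (-(X ω))
    exact ⟨k, by linarith⟩
  have htendI : Tendsto (fun k : ℕ => μ {ω | X ω < -(k : ℝ)}) atTop (𝓝 0) := by
    have hm : Antitone (fun k : ℕ => {ω | X ω < -(k : ℝ)}) := by
      intro a b hab ω h
      simp only [Set.mem_setOf_eq] at h ⊢
      have : -(b : ℝ) ≤ -(a : ℝ) := neg_le_neg (by exact_mod_cast hab)
      exact lt_of_lt_of_le h this
    have := tendsto_measure_iInter_atTop (μ := μ) (s := fun k : ℕ => {ω | X ω < -(k : ℝ)})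
      (fun k => ((hX measurableSet_Iio : MeasurableSet {ω | X ω < -(k:ℝ)}).nullMeasurableSet)) hm ⟨0, measure_ne_top μ _⟩
    rw [hInter, measure_empty] at this
    exact this
  have htendIr : Tendsto (fun k : ℕ => F (-(k : ℝ))) atTop (𝓝 0) := by
    have := (ENNReal.tendsto_toReal (by norm_num : (0 : ENNReal) ≠ ⊤)).comp htendI
    simpa [hF, Function.comp_def] using this
  have hQbdd : BddBelow Q := by
    have : ∀ᶠ k : ℕ in atTop, F (-(k : ℝ)) ∈ Set.Iio t := htendIr (Iio_mem_nhds ht0)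
    obtain ⟨k, hk⟩ := this.exists
    refine ⟨-(k : ℝ), fun y hy => ?_⟩
    by_contra hlt
    push_neg at hlt
    exact absurd (le_trans hy (hmono hlt.le)) (not_le.2 hk)
  set x₀ := sInf Q with hx₀
  have hFx₀ : F x₀ = t := by
    have h1 : t ≤ F x₀ := by
      refine le_of_forall_pos_le_add fun ε hε => ?_
      obtain ⟨s, hsQ, hs⟩ := (csInf_lt_iff hQbdd hQne).1 (lt_add_of_pos_right x₀ (div_pos hε hD))
      have hx₀s : x₀ ≤ s := csInf_le hQbdd hsQ
      have := hLip s x₀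
      rw [abs_of_nonneg (sub_nonneg.2 (hmono hx₀s)), abs_of_nonneg (sub_nonneg.2 hx₀s)] at this
      have h2 : D * (s - x₀) ≤ D * (ε / D) := by
        apply mul_le_mul_of_nonneg_left (by linarith) hD.le
      rw [mul_div_cancel₀ _ hD.ne'] at h2
      have := hsQ
      simp only [hQ, Set.mem_setOf_eq] at this
      linarith [hLip s x₀, this]
    have h2 : F x₀ ≤ t := by
      refine le_of_forall_pos_le_add fun ε hε => ?_
      have hnot : x₀ - ε / D ∉ Q := fun hmem => by
        have := csInf_le hQbdd hmem
        have : (0:ℝ) < ε / D := div_pos hε hD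
        linarith [csInf_le hQbdd hmem]
      have hFlt : F (x₀ - ε / D) < t := by
        simp only [hQ, Set.mem_setOf_eq, not_le] at hnot; exact hnot
      have := hLip x₀ (x₀ - ε / D)
      have hd : (0:ℝ) < ε / D := div_pos hε hD
      rw [show x₀ - (x₀ - ε / D) = ε / D by ring, abs_of_pos hd] at this
      rw [mul_div_cancel₀ _ hD.ne'] at this
      have := abs_le.1 this
      linarith [this.2]
    linarith
  have hseteq : {ω | t ≤ F (X ω)} = {ω | x₀ ≤ X ω} := by
    ext ω
    simp only [Set.mem_setOf_eq]
    constructor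
    · intro h; exact csInf_le hQbdd h
    · intro h; calc t = F x₀ := hFx₀.symm
        _ ≤ F (X ω) := hmono h
  rw [hseteq]
  have : {ω | x₀ ≤ X ω} = {ω | X ω < x₀}ᶜ := by
    ext ω; simp [not_lt]
  have hms : MeasurableSet {ω | X ω < x₀} := hX measurableSet_Iio
  rw [this, measure_compl hms (measure_ne_top μ _), measure_univ]
  rw [ENNReal.toReal_sub_of_le prob_le_one ENNReal.one_ne_top, ENNReal.toReal_one, ← hF, hFx₀]


lemma stmt13_ext {ι : Type*} [Fintype ι] (v : ι → ℝ) (F : ℝ → ℝ) (D δ₁ : ℝ) (hD : 0 < D)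
    (hLip : ∀ x y, |F x - F y| ≤ D * |x - y|)
    (h : ∀ q : ℚ, |(∑ π : ι, (if v π < (q:ℝ) then (1:ℝ) else 0)) / (Fintype.card ι : ℝ) - F q| ≤ δ₁)
    (x : ℝ) :
    |(∑ π : ι, (if v π < x then (1:ℝ) else 0)) / (Fintype.card ι : ℝ) - F x| ≤ δ₁ := by
  classical
  refine le_of_forall_pos_le_add fun ε hε => ?_
  set η := ε / D with hη
  have hηpos : 0 < η := div_pos hε hD
  set l : ℝ := ((insert (x - η) ((Finset.univ.filter (fun π => v π < x)).image v)).max'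
      (Finset.insert_nonempty _ _)) with hl
  have hlx : l < x := by
    rw [hl, Finset.max'_lt_iff]
    intro y hy
    rcases Finset.mem_insert.1 hy with rfl | hy
    · linarith
    · obtain ⟨π, hπ, rfl⟩ := Finset.mem_image.1 hy
      exact (Finset.mem_filter.1 hπ).2
  have hlb : x - η ≤ l := Finset.le_max' _ _ (Finset.mem_insert_self _ _)
  obtain ⟨q, hq1, hq2⟩ := exists_rat_btwn hlx
  have hiff : ∀ π : ι, (v π < (q:ℝ)) ↔ (v π < x) := by
    intro π
    constructor
    · intro h'; exact h'.trans hq2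
    · intro h'
      have : v π ≤ l := Finset.le_max' _ _ (Finset.mem_insert_of_mem
        (Finset.mem_image.2 ⟨π, Finset.mem_filter.2 ⟨Finset.mem_univ _, h'⟩, rfl⟩))
      exact lt_of_le_of_lt this hq1
  have hsum : (∑ π : ι, (if v π < (q:ℝ) then (1:ℝ) else 0))
      = ∑ π : ι, (if v π < x then (1:ℝ) else 0) := by
    refine Finset.sum_congr rfl fun π _ => ?_
    rw [if_congr (hiff π) rfl rfl]
  have hFq : |F q - F x| ≤ ε := by
    have h1 : |(q:ℝ) - x| ≤ η := by
      rw [abs_of_nonpos (by linarith)]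
      linarith
    calc |F q - F x| ≤ D * |(q:ℝ) - x| := hLip q x
      _ ≤ D * η := by nlinarith
      _ = ε := by rw [hη, mul_div_cancel₀ _ hD.ne']
  have h2 := h q
  rw [hsum] at h2
  calc |(∑ π : ι, (if v π < x then (1:ℝ) else 0)) / (Fintype.card ι : ℝ) - F x|
      ≤ |(∑ π : ι, (if v π < x then (1:ℝ) else 0)) / (Fintype.card ι : ℝ) - F q|
        + |F q - F x| := abs_sub_le _ _ _
    _ ≤ δ₁ + ε := add_le_add h2 hFq

lemma stmt13_key {ι : Type*} [Fintype ι] (i0 : ι) (s t : ι → ℝ) (F : ℝ → ℝ) (D δ₁ δ₂ : ℝ)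
    (hδ₂ : 0 < δ₂) (hD : 0 < D)
    (hLip : ∀ x y, |F x - F y| ≤ D * |x - y|)
    (hEω : ∀ x : ℝ, |(∑ π : ι, (if t π < x then (1:ℝ) else 0)) / (Fintype.card ι : ℝ) - F x| ≤ δ₁)
    (hA1 : (∑ π : ι, (s π - t π) ^ 2) / (Fintype.card ι : ℝ) ≤ δ₂ ^ 2)
    (hA2 : |s i0 - t i0| ≤ δ₂) :
    |(∑ π : ι, (if s π < s i0 then (1:ℝ) else 0)) / (Fintype.card ι : ℝ) - F (t i0)|
      ≤ δ₁ + δ₂ + D * (δ₂ + Real.sqrt δ₂) := by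
  classical
  have hne : Nonempty ι := ⟨i0⟩
  have hnpos : (0:ℝ) < (Fintype.card ι : ℝ) := by exact_mod_cast Fintype.card_pos
  set n : ℝ := (Fintype.card ι : ℝ) with hn
  set ε := Real.sqrt δ₂ with hε
  have hεpos : 0 < ε := Real.sqrt_pos.2 hδ₂
  have hε2 : ε ^ 2 = δ₂ := Real.sq_sqrt hδ₂.le
  set B := Finset.univ.filter (fun π : ι => ε < |s π - t π|) with hB
  have hsumsq : ∑ π : ι, (s π - t π) ^ 2 ≤ n * δ₂ ^ 2 := by
    rw [div_le_iff₀ hnpos] at hA1; linarith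
  have hcard : (B.card : ℝ) ≤ n * δ₂ := by
    have h1 : (B.card : ℝ) * δ₂ = ∑ _π ∈ B, δ₂ := by
      rw [Finset.sum_const, nsmul_eq_mul]
    have h2 : ∑ _π ∈ B, δ₂ ≤ ∑ π ∈ B, (s π - t π) ^ 2 := by
      refine Finset.sum_le_sum fun π hπ => ?_
      have := (Finset.mem_filter.1 hπ).2
      nlinarith [abs_nonneg (s π - t π), sq_abs (s π - t π)]
    have h3 : ∑ π ∈ B, (s π - t π) ^ 2 ≤ ∑ π : ι, (s π - t π) ^ 2 :=
      Finset.sum_le_sum_of_subset_of_nonneg (Finset.subset_univ _)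
        (fun π _ _ => sq_nonneg _)
    nlinarith
  set x := s i0 with hx
  have hBiff : ∀ π : ι, π ∉ B → |s π - t π| ≤ ε := by
    intro π hπ
    rw [hB] at hπ
    simp only [Finset.mem_filter, Finset.mem_univ, true_and, not_lt] at hπ
    exact hπ
  have hBcard : ∑ π : ι, (if π ∈ B then (1:ℝ) else 0) = B.card := by
    rw [Finset.sum_ite_mem, Finset.univ_inter, Finset.sum_const, nsmul_eq_mul, mul_one]
  have hup : ∑ π : ι, (if s π < x then (1:ℝ) else 0)
      ≤ (∑ π : ι, (if t π < x + ε then (1:ℝ) else 0)) + B.card := by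
    have hpt : ∀ π : ι, (if s π < x then (1:ℝ) else 0)
        ≤ (if t π < x + ε then (1:ℝ) else 0) + (if π ∈ B then (1:ℝ) else 0) := by
      intro π
      by_cases hπ : π ∈ B
      · have h1 : (if s π < x then (1:ℝ) else 0) ≤ 1 := by split_ifs <;> norm_num
        have h2 : (0:ℝ) ≤ if t π < x + ε then (1:ℝ) else 0 := by split_ifs <;> norm_num
        simp only [hπ, if_true]; linarith
      · have hd := abs_le.1 (hBiff π hπ)
        simp only [hπ, if_false, add_zero]
        by_cases hs : s π < x
        · have : t π < x + ε := by linarith [hd.1]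
          simp [hs, this]
        · simp only [hs, if_false]
          split_ifs <;> norm_num
    calc ∑ π : ι, (if s π < x then (1:ℝ) else 0)
        ≤ ∑ π : ι, ((if t π < x + ε then (1:ℝ) else 0) + (if π ∈ B then (1:ℝ) else 0)) :=
          Finset.sum_le_sum fun π _ => hpt π
      _ = (∑ π : ι, (if t π < x + ε then (1:ℝ) else 0)) + B.card := by
          rw [Finset.sum_add_distrib, hBcard]
  have hdown : ∑ π : ι, (if t π < x - ε then (1:ℝ) else 0)
      ≤ (∑ π : ι, (if s π < x then (1:ℝ) else 0)) + B.card := by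
    have hpt : ∀ π : ι, (if t π < x - ε then (1:ℝ) else 0)
        ≤ (if s π < x then (1:ℝ) else 0) + (if π ∈ B then (1:ℝ) else 0) := by
      intro π
      by_cases hπ : π ∈ B
      · have h1 : (if t π < x - ε then (1:ℝ) else 0) ≤ 1 := by split_ifs <;> norm_num
        have h2 : (0:ℝ) ≤ if s π < x then (1:ℝ) else 0 := by split_ifs <;> norm_num
        simp only [hπ, if_true]; linarith
      · have hd := abs_le.1 (hBiff π hπ)
        simp only [hπ, if_false, add_zero]
        by_cases ht : t π < x - ε
        · have : s π < x := by linarith [hd.2]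
          simp [ht, this]
        · simp only [ht, if_false]
          split_ifs <;> norm_num
    calc ∑ π : ι, (if t π < x - ε then (1:ℝ) else 0)
        ≤ ∑ π : ι, ((if s π < x then (1:ℝ) else 0) + (if π ∈ B then (1:ℝ) else 0)) :=
          Finset.sum_le_sum fun π _ => hpt π
      _ = (∑ π : ι, (if s π < x then (1:ℝ) else 0)) + B.card := by
          rw [Finset.sum_add_distrib, hBcard]
  -- translate to normalized versions
  have hcardn : (B.card : ℝ) / n ≤ δ₂ := by
    rw [div_le_iff₀ hnpos]; linarith
  have hupn : (∑ π : ι, (if s π < x then (1:ℝ) else 0)) / n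
      ≤ (∑ π : ι, (if t π < x + ε then (1:ℝ) else 0)) / n + (B.card : ℝ) / n := by
    rw [← add_div]; gcongr
  have hdownn : (∑ π : ι, (if t π < x - ε then (1:ℝ) else 0)) / n
      ≤ (∑ π : ι, (if s π < x then (1:ℝ) else 0)) / n + (B.card : ℝ) / n := by
    rw [← add_div]; gcongr
  have hE1 := abs_le.1 (hEω (x + ε))
  have hE2 := abs_le.1 (hEω (x - ε))
  have hA2' := abs_le.1 hA2
  have hL1 : |F (x + ε) - F (t i0)| ≤ D * (δ₂ + ε) := by
    calc |F (x + ε) - F (t i0)| ≤ D * |x + ε - t i0| := hLip _ _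
      _ ≤ D * (δ₂ + ε) := by
          apply mul_le_mul_of_nonneg_left _ hD.le
          rw [abs_le]; constructor <;> [linarith [hA2'.1]; linarith [hA2'.2]]
  have hL2 : |F (x - ε) - F (t i0)| ≤ D * (δ₂ + ε) := by
    calc |F (x - ε) - F (t i0)| ≤ D * |x - ε - t i0| := hLip _ _
      _ ≤ D * (δ₂ + ε) := by
          apply mul_le_mul_of_nonneg_left _ hD.le
          rw [abs_le]; constructor <;> [linarith [hA2'.1]; linarith [hA2'.2]]
  have hL1' := abs_le.1 hL1
  have hL2' := abs_le.1 hL2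
  rw [abs_le]
  constructor
  · -- lower bound
    have := hE2.1
    linarith [hdownn, hE2.1, hL2'.2, hcardn]
  · linarith [hupn, hE1.2, hL1'.1, hcardn]




/-- Theorem 2, Approximate General Validity of Conformal Inference:
Let `Z` be a stochastic process and `Π` a finite set of `n` permutations containing the
identity (modeled by a finite index type `ι` with distinguished element `i0`, where
`S π ω = S(Z^π)(ω)` and `Sstar π ω = S_*(Z^π)(ω)`, so `S(Z) = S i0`, `S_*(Z) = Sstar i0`).
Let `F(x) = P(S_*(Z) < x)` and `F̃(x) = n⁻¹ Σ_π 1{S_*(Z^π) < x}`,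
`F̂(x) = n⁻¹ Σ_π 1{S(Z^π) < x}`, and `p̂ = 1 - F̂(S(Z))`.
Condition (E): with probability ≥ 1-γ₁, `sup_x |F̃(x) - F(x)| ≤ δ₁`.
Condition (A): with probability ≥ 1-γ₂, `n⁻¹ Σ_π (S(Z^π) - S_*(Z^π))² ≤ δ₂²` and
`|S(Z) - S_*(Z)| ≤ δ₂`; moreover the pdf of `S_*(Z)` is bounded by `D`
(formalized: `F` is `D`-Lipschitz).  Then for any `α ∈ (0,1)`,
`|P(p̂ ≤ α) - α| ≤ 6δ₁ + 4δ₂ + 2D(δ₂ + 2√δ₂) + γ₁ + γ₂`. -/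
theorem stmt13 {Ω : Type*} [MeasurableSpace Ω] (μ : Measure Ω) [IsProbabilityMeasure μ]
    {ι : Type*} [Fintype ι] (i0 : ι)
    (S Sstar : ι → Ω → ℝ)
    (hS : ∀ π, Measurable (S π)) (hSstar : ∀ π, Measurable (Sstar π))
    (δ₁ δ₂ γ₁ γ₂ D : ℝ) (hδ₁ : 0 < δ₁) (hδ₂ : 0 < δ₂)
    (hγ₁ : 0 ≤ γ₁) (hγ₂ : 0 ≤ γ₂) (hD : 0 < D)
    (F : ℝ → ℝ) (hF : ∀ x, F x = (μ {ω | Sstar i0 ω < x}).toReal)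
    -- the pdf of S_*(Z) is bounded by D:
    (hLip : ∀ x y, |F x - F y| ≤ D * |x - y|)
    -- Condition (E):
    (hE : ENNReal.ofReal (1 - γ₁) ≤ μ {ω | ∀ x : ℝ,
      |(∑ π : ι, (if Sstar π ω < x then (1 : ℝ) else 0)) / (Fintype.card ι : ℝ) - F x|
        ≤ δ₁})
    -- Condition (A), parts (1) and (2):
    (hA : ENNReal.ofReal (1 - γ₂) ≤ μ {ω |
      (∑ π : ι, (S π ω - Sstar π ω) ^ 2) / (Fintype.card ι : ℝ) ≤ δ₂ ^ 2 ∧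
      |S i0 ω - Sstar i0 ω| ≤ δ₂})
    (α : ℝ) (hα0 : 0 < α) (hα1 : α < 1) :
    |(μ {ω | 1 -
        (∑ π : ι, (if S π ω < S i0 ω then (1 : ℝ) else 0)) / (Fintype.card ι : ℝ)
        ≤ α}).toReal - α|
      ≤ 6 * δ₁ + 4 * δ₂ + 2 * D * (δ₂ + 2 * Real.sqrt δ₂) + γ₁ + γ₂ := by
    classical
  have hne : Nonempty ι := ⟨i0⟩
  have hsqrt : 0 ≤ Real.sqrt δ₂ := Real.sqrt_nonneg _
  set c := δ₁ + δ₂ + D * (δ₂ + Real.sqrt δ₂) with hc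
  have hcpos : 0 < c := by
    have : 0 < D * (δ₂ + Real.sqrt δ₂) := mul_pos hD (by linarith)
    linarith
  set Eset : Set Ω := {ω | ∀ q : ℚ,
      |(∑ π : ι, (if Sstar π ω < (q:ℝ) then (1:ℝ) else 0)) / (Fintype.card ι : ℝ) - F q|
        ≤ δ₁} with hEset
  set Aset : Set Ω := {ω |
      (∑ π : ι, (S π ω - Sstar π ω) ^ 2) / (Fintype.card ι : ℝ) ≤ δ₂ ^ 2 ∧
      |S i0 ω - Sstar i0 ω| ≤ δ₂} with hAset
  set T : Set Ω := {ω | 1 -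
      (∑ π : ι, (if S π ω < S i0 ω then (1 : ℝ) else 0)) / (Fintype.card ι : ℝ)
      ≤ α} with hT
  -- measurability
  have hEmeas : MeasurableSet Eset := by
    have heq : Eset = ⋂ q : ℚ, {ω |
        |(∑ π : ι, (if Sstar π ω < (q:ℝ) then (1:ℝ) else 0)) / (Fintype.card ι : ℝ) - F q|
          ≤ δ₁} := by
      ext ω; simp only [hEset, Set.mem_setOf_eq, Set.mem_iInter]
    rw [heq]
    refine MeasurableSet.iInter fun q => ?_
    have hm : Measurable fun ω =>
        |(∑ π : ι, (if Sstar π ω < (q:ℝ) then (1:ℝ) else 0)) / (Fintype.card ι : ℝ) - F q| := by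
      apply Measurable.abs
      apply Measurable.sub _ measurable_const
      apply Measurable.div_const
      apply Finset.measurable_sum
      intro π _
      exact Measurable.ite ((hSstar π) measurableSet_Iio) measurable_const measurable_const
    exact measurableSet_le hm measurable_const
  have hAmeas : MeasurableSet Aset := by
    rw [hAset, Set.setOf_and]
    refine MeasurableSet.inter ?_ ?_
    · apply measurableSet_le _ measurable_const
      apply Measurable.div_const
      apply Finset.measurable_sum
      intro π _
      exact ((hS π).sub (hSstar π)).pow_const 2
    · exact measurableSet_le (((hS i0).sub (hSstar i0)).abs) measurable_const
  -- probability bounds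
  have hEbound : ENNReal.ofReal (1 - γ₁) ≤ μ Eset := by
    refine hE.trans (measure_mono fun ω hω => ?_)
    intro q
    exact hω (q : ℝ)
  have hAbound : ENNReal.ofReal (1 - γ₂) ≤ μ Aset := hA
  have hprob : ∀ (B : Set Ω) (γ : ℝ), MeasurableSet B → ENNReal.ofReal (1-γ) ≤ μ B →
      (μ Bᶜ).toReal ≤ γ := by
    intro B γ hB hμ
    rw [measure_compl hB (measure_ne_top μ _), measure_univ,
      ENNReal.toReal_sub_of_le prob_le_one ENNReal.one_ne_top, ENNReal.toReal_one]
    have h1 : 1 - γ ≤ (μ B).toReal := by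
      rcases le_or_gt (1-γ) 0 with h | h
      · exact h.trans ENNReal.toReal_nonneg
      · calc 1 - γ = (ENNReal.ofReal (1-γ)).toReal := by rw [ENNReal.toReal_ofReal h.le]
          _ ≤ (μ B).toReal := ENNReal.toReal_mono (measure_ne_top μ _) hμ
    linarith
  have hGc : (μ (Eset ∩ Aset)ᶜ).toReal ≤ γ₁ + γ₂ := by
    rw [Set.compl_inter]
    calc (μ (Esetᶜ ∪ Asetᶜ)).toReal ≤ (μ Esetᶜ + μ Asetᶜ).toReal := by
          apply ENNReal.toReal_mono _ (measure_union_le _ _)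
          exact ENNReal.add_ne_top.2 ⟨measure_ne_top μ _, measure_ne_top μ _⟩
      _ = (μ Esetᶜ).toReal + (μ Asetᶜ).toReal :=
          ENNReal.toReal_add (measure_ne_top μ _) (measure_ne_top μ _)
      _ ≤ γ₁ + γ₂ := add_le_add (hprob _ _ hEmeas hEbound) (hprob _ _ hAmeas hAbound)
  -- key pointwise bound
  have hkey : ∀ ω ∈ Eset ∩ Aset,
      |(∑ π : ι, (if S π ω < S i0 ω then (1:ℝ) else 0)) / (Fintype.card ι : ℝ)
        - F (Sstar i0 ω)| ≤ c := by
    intro ω hω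
    have hEω := stmt13_ext (fun π => Sstar π ω) F D δ₁ hD hLip hω.1
    exact stmt13_key i0 (fun π => S π ω) (fun π => Sstar π ω) F D δ₁ δ₂ hδ₂ hD hLip
      hEω hω.2.1 hω.2.2
  -- inclusions
  have hsub1 : T ⊆ {ω | 1 - α - c ≤ F (Sstar i0 ω)} ∪ (Eset ∩ Aset)ᶜ := by
    intro ω hω
    by_cases hG : ω ∈ Eset ∩ Aset
    · left
      have hk := (abs_le.1 (hkey ω hG)).2
      have hTm : 1 - (∑ π : ι, (if S π ω < S i0 ω then (1:ℝ) else 0)) / (Fintype.card ι : ℝ)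
          ≤ α := hω
      simp only [Set.mem_setOf_eq]
      linarith
    · right; exact hG
  have hsub2 : {ω | 1 - α + c ≤ F (Sstar i0 ω)} ⊆ T ∪ (Eset ∩ Aset)ᶜ := by
    intro ω hω
    by_cases hG : ω ∈ Eset ∩ Aset
    · left
      have hk := (abs_le.1 (hkey ω hG)).1
      have hm : 1 - α + c ≤ F (Sstar i0 ω) := hω
      show 1 - (∑ π : ι, (if S π ω < S i0 ω then (1:ℝ) else 0)) / (Fintype.card ι : ℝ) ≤ α
      linarith
    · right; exact hG
  -- measure inequalities
  have hmeasineq : ∀ (X Y : Set Ω), X ⊆ Y ∪ (Eset ∩ Aset)ᶜ →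
      (μ X).toReal ≤ (μ Y).toReal + (γ₁ + γ₂) := by
    intro X Y hXY
    have h3 : μ X ≤ μ Y + μ (Eset ∩ Aset)ᶜ :=
      (measure_mono hXY).trans (measure_union_le _ _)
    have h4 := ENNReal.toReal_mono
      (ENNReal.add_ne_top.2 ⟨measure_ne_top μ _, measure_ne_top μ _⟩) h3
    rw [ENNReal.toReal_add (measure_ne_top μ _) (measure_ne_top μ _)] at h4
    linarith
  have hTub' := hmeasineq T _ hsub1
  have hTlb' := hmeasineq _ T hsub2
  -- quantile
  have hQ : ∀ t : ℝ, 0 < t → t < 1 → (μ {ω | t ≤ F (Sstar i0 ω)}).toReal = 1 - t :=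
    fun t h1 h2 => stmt13_quantile μ (Sstar i0) (hSstar i0) F hF D hD hLip t h1 h2
  have hT1 : (μ T).toReal ≤ 1 := by
    have := ENNReal.toReal_mono ENNReal.one_ne_top (prob_le_one (μ := μ) (s := T))
    simpa using this
  have hub : (μ T).toReal ≤ α + c + (γ₁ + γ₂) := by
    rcases lt_or_ge 0 (1 - α - c) with h | h
    · have h2 : 1 - α - c < 1 := by linarith
      rw [hQ _ h h2] at hTub'
      linarith
    · linarith
  have hlb : α - c - (γ₁ + γ₂) ≤ (μ T).toReal := by
    rcases lt_or_ge (1 - α + c) 1 with h | h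
    · have h2 : 0 < 1 - α + c := by linarith
      rw [hQ _ h2 h] at hTlb'
      linarith [ENNReal.toReal_nonneg (a := μ {ω | 1 - α + c ≤ F (Sstar i0 ω)})]
    · have : 0 ≤ (μ T).toReal := ENNReal.toReal_nonneg
      linarith
  rw [abs_le]
  constructor
  · nlinarith
  · nlinarith
end
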